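/- For a primary Gaussian prime π = a + bi, the quartic residue symbol satisfies (i/π)₄ = i^((−a+1)/2). -/

import Mathlib

/-! Write the primary prime as `π = 1 + 2(1+i)(u+vi)`, so `a = 1 + 2(u-v)` and `b = 2(u+v)`.
Then `Nπ = 4K + 1` with `K = 2u² + u + 2v² - v`, hence `(i/π)₄ = i^K` on the nose, and
`K - (v - u) = 2u(u+1) + 2v(v-1) ≡ 0 (mod 4)` gives `i^K = i^(v-u) = i^((1-a)/2)`.
The power of `i` in the definition of the symbol is unique because distinct powers of `i` differ
by an element of norm dividing `4`, while `Nπ` is odd and greater than `1`. -/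

open Zsqrtd

local notation "ℤ[i]" => GaussianInt

/-- The imaginary unit `i` in `ℤ[i]`. -/
def gi : ℤ[i] := Zsqrtd.sqrtd

/-- `α` is primary if `α ≡ 1 (mod 2(1+i))`. -/
def IsPrimary (α : ℤ[i]) : Prop := 2 * (1 + gi) ∣ α - 1
open scoped Classical in
/-- The quartic residue symbol `(α/π)₄`: the unique power of `i` congruent to
`α ^ ((Nπ - 1)/4)` modulo `π`, where `Nπ` is the cardinality of `ℤ[i]/(π)`. -/
noncomputable def quartic (α π : ℤ[i]) : ℤ[i] :=
  if h : ∃ k : Fin 4,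
      π ∣ α ^ ((Nat.card (ℤ[i] ⧸ Ideal.span {π}) - 1) / 4) - gi ^ (k : ℕ)
  then gi ^ ((h.choose : Fin 4) : ℕ) else 0

/-- `i` as a unit of `ℤ[i]`. -/
def giUnit : (GaussianInt)ˣ := ⟨gi, -gi, by decide, by decide⟩

namespace Zsqrtd

variable {d : ℤ}

noncomputable def basisReIm : Module.Basis (Fin 2) ℤ (ℤ√d) :=
  Module.Basis.ofEquivFun
  { toFun := fun z => ![z.re, z.im]
    invFun := fun f => ⟨f 0, f 1⟩
    left_inv := fun z => by simp
    right_inv := fun f => by ext i; fin_cases i <;> simp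
    map_add' := fun x y => by ext i; fin_cases i <;> simp
    map_smul' := fun n x => by ext i; fin_cases i <;> simp }

instance : Module.Free ℤ (ℤ√d) := .of_basis basisReIm
instance : Module.Finite ℤ (ℤ√d) := .of_basis basisReIm

theorem algebraNorm_eq_norm (x : ℤ√d) : Algebra.norm ℤ x = x.norm := by
  rw [Algebra.norm_eq_matrix_det basisReIm, Matrix.det_fin_two]
  simp [Algebra.leftMulMatrix_eq_repr_mul, basisReIm, norm_def, re_mul, im_mul]

end Zsqrtd

theorem GaussianInt.natCard_quotient_span_singleton (x : ℤ[i]) :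
    Nat.card (ℤ[i] ⧸ Ideal.span {x}) = x.norm.natAbs := by
  rw [← Submodule.cardQuot_apply, ← Ideal.absNorm_apply, Ideal.absNorm_span_singleton,
    algebraNorm_eq_norm]

theorem gi_pow_four : gi ^ 4 = 1 := by decide

theorem giUnit_zpow_eq_zpow_of_modEq {m n : ℤ} (h : m ≡ n [ZMOD 4]) : giUnit ^ m = giUnit ^ n :=
  zpow_eq_zpow_iff_modEq.2 <| h.of_dvd <|
    Int.natCast_dvd_natCast.2 <| orderOf_dvd_of_pow_eq_one (by ext <;> decide)

theorem eq_of_dvd_gi_pow_sub_gi_pow {π : ℤ[i]} (hπ : ¬IsUnit π) (hodd : Odd π.norm)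
    {s t : Fin 4} (h : π ∣ gi ^ (s : ℕ) - gi ^ (t : ℕ)) : s = t := by
  by_contra hst
  have hnorm : (gi ^ (s : ℕ) - gi ^ (t : ℕ)).norm ∣ 4 := by
    fin_cases s <;> fin_cases t <;> first | exact absurd rfl hst | decide
  have h4 : π.norm.natAbs ∣ 4 := Int.natAbs_dvd_natAbs.2 <| (map_dvd normMonoidHom h).trans hnorm
  have hcop : π.norm.natAbs.Coprime 4 :=
    Nat.Coprime.pow_right 2 <| Nat.coprime_two_right.2 <| Int.natAbs_odd.2 hodd
  exact hπ <| norm_eq_one_iff.1 <| hcop.eq_one_of_dvd h4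

theorem quartic_eq_of_dvd {α π : ℤ[i]} (hπ : ¬IsUnit π) (hodd : Odd π.norm) (k : Fin 4)
    (h : π ∣ α ^ ((Nat.card (ℤ[i] ⧸ Ideal.span {π}) - 1) / 4) - gi ^ (k : ℕ)) :
    quartic α π = gi ^ (k : ℕ) := by
  have hex : ∃ k : Fin 4,
      π ∣ α ^ ((Nat.card (ℤ[i] ⧸ Ideal.span {π}) - 1) / 4) - gi ^ (k : ℕ) := ⟨k, h⟩
  have hchoose : hex.choose = k := eq_of_dvd_gi_pow_sub_gi_pow hπ hodd <| by
    simpa only [sub_sub_sub_cancel_left] using dvd_sub h hex.choose_spec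
  rw [quartic, dif_pos hex, hchoose]

theorem quartic_gi {π : ℤ[i]} (hπ : ¬IsUnit π) (hodd : Odd π.norm) :
    quartic gi π = gi ^ ((Nat.card (ℤ[i] ⧸ Ideal.span {π}) - 1) / 4) := by
  rw [pow_eq_pow_mod _ gi_pow_four]
  refine quartic_eq_of_dvd hπ hodd ⟨_, Nat.mod_lt _ four_pos⟩ ?_
  rw [← pow_eq_pow_mod _ gi_pow_four, sub_self]
  exact dvd_zero π

theorem IsPrimary.exists_re_im {π : ℤ[i]} (hp : IsPrimary π) :
    ∃ u v : ℤ, π.re = 1 + 2 * (u - v) ∧ π.im = 2 * (u + v) := by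
  obtain ⟨z, hz⟩ := hp
  rw [sub_eq_iff_eq_add'] at hz
  subst hz
  refine ⟨z.re, z.im, ?_, ?_⟩ <;>
  · simp only [gi, re_add, im_add, re_mul, im_mul, re_one, im_one, re_sqrtd, im_sqrtd, re_ofNat,
      im_ofNat]
    ring

theorem IsPrimary.exists_norm_eq {π : ℤ[i]} (hp : IsPrimary π) :
    ∃ K : ℕ, π.norm = 4 * K + 1 ∧ (K : ℤ) ≡ (-π.re + 1) / 2 [ZMOD 4] := by
  obtain ⟨u, v, hre, him⟩ := hp.exists_re_im
  have hnorm : π.norm = 4 * (2 * u ^ 2 + u + (2 * v ^ 2 - v)) + 1 := by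
    rw [norm_def, hre, him]
    ring
  have hnonneg := norm_nonneg (by norm_num) π
  lift 2 * u ^ 2 + u + (2 * v ^ 2 - v) to ℕ using (by omega) with K hK
  refine ⟨K, hnorm, ?_⟩
  obtain ⟨m, hm⟩ := Int.even_mul_succ_self u
  obtain ⟨n, hn⟩ := Int.even_mul_pred_self v
  rw [show (-π.re + 1) / 2 = v - u by omega, Int.modEq_iff_dvd]
  exact ⟨-(m + n), by linear_combination -2 * hm - 2 * hn - hK⟩

/-- For a primary Gaussian prime `π = a + bi`, one has `(i/π)₄ = i^((-a+1)/2)`. -/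
theorem quartic_i (π : ℤ[i]) (hπ : Prime π) (hp : IsPrimary π) :
    quartic gi π = ((giUnit ^ ((-π.re + 1) / 2) : (GaussianInt)ˣ) : ℤ[i]) := by
  obtain ⟨K, hnorm, hK⟩ := hp.exists_norm_eq
  have hcard : (Nat.card (ℤ[i] ⧸ Ideal.span {π}) - 1) / 4 = K := by
    rw [GaussianInt.natCard_quotient_span_singleton, hnorm]
    omega
  rw [quartic_gi hπ.not_isUnit ⟨2 * K, by omega⟩, hcard, ← giUnit_zpow_eq_zpow_of_modEq hK,
    zpow_natCast, Units.val_pow_eq_pow_val]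
  rfl
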